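/- Let A be a C*-algebra and D ⊆ A an abelian closed *-subalgebra containing an approximate unit for A. Suppose that n, m ∈ N(D) satisfy ‖n − m‖ < ‖n‖/5. Then α_n(φ) = α_m(φ) for every character φ of D satisfying φ(n*n) > ‖n‖²/2. -/

import Mathlib

open WeakDual Filter Topology Classical

variable {A : Type} [NonUnitalNormedRing A] [StarRing A] [CStarRing A]
  [NormedSpace ℂ A] [IsScalarTower ℂ A A] [SMulCommClass ℂ A A] [CompleteSpace A] [StarModule ℂ A]

/-- Evaluation of a character of `D` at an element of `A` (taken to be `0` off `D`). -/
noncomputable def evalD (D : NonUnitalStarSubalgebra ℂ A) (φ : characterSpace ℂ D) (a : A) : ℂ :=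
  if h : a ∈ D then φ (⟨a, h⟩ : D) else 0

/-- The open support `supp°(a) = {φ ∈ D̂ : φ(a) ≠ 0}`. -/
def suppo (D : NonUnitalStarSubalgebra ℂ A) (a : A) : Set (characterSpace ℂ D) :=
  {φ | evalD D φ a ≠ 0}

/-- `n` is a normaliser of `D` in `A`. -/
def IsNormalizer (D : NonUnitalStarSubalgebra ℂ A) (n : A) : Prop :=
  ∀ d ∈ D, n * d * star n ∈ D ∧ star n * d * n ∈ D

/-- `S` contains an approximate unit for `A`: there is a net in `S` converging
multiplicatively to the identity on every element of `A`. -/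
def HasApproxUnit (S : Set A) : Prop :=
  ∃ (ι : Type) (l : Filter ι) (e : ι → A), l.NeBot ∧ (∀ i, e i ∈ S) ∧
    ∀ a : A, Tendsto (fun i => e i * a) l (nhds a) ∧ Tendsto (fun i => a * e i) l (nhds a)

/-- `α` is "the" homeomorphism `α_n : supp°(n*n) → supp°(nn*)` attached to a normaliser `n`,
i.e. a partial homeomorphism of `D̂` with source `supp°(n*n)`, target `supp°(nn*)`, and
satisfying `φ(n*n)·(α_n φ)(d) = φ(n* d n)` for all `φ` in the source and `d ∈ D`. -/
def IsWeylHomeo (D : NonUnitalStarSubalgebra ℂ A) (n : A)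
    (α : PartialHomeomorph (characterSpace ℂ D) (characterSpace ℂ D)) : Prop :=
  α.source = suppo D (star n * n) ∧ α.target = suppo D (n * star n) ∧
  ∀ φ ∈ α.source, ∀ d ∈ D, evalD D φ (star n * n) * evalD D (α φ) d = evalD D φ (star n * d * n)

/-- The relative commutant `D' = {a ∈ A : a d = d a for all d ∈ D}`, as a set. -/
def commutantSet (D : NonUnitalStarSubalgebra ℂ A) : Set A := {a | ∀ d ∈ D, a * d = d * a}

/-- The ideal `J_φ ⊆ D'`: the closure of `(ker φ)·D'`. -/
noncomputable def Jset (D : NonUnitalStarSubalgebra ℂ A) (φ : characterSpace ℂ D) : Set A :=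
  closure ((Submodule.span ℂ {x : A | ∃ k ∈ (D : Set A), ∃ a ∈ commutantSet D,
    evalD D φ k = 0 ∧ x = k * a} : Submodule ℂ A) : Set A)

/-- `e ∈ D'` represents the unit of `D'/J_φ`. -/
def IsUnitModJ (D : NonUnitalStarSubalgebra ℂ A) (φ : characterSpace ℂ D) (e : A) : Prop :=
  e ∈ commutantSet D ∧ ∀ a ∈ commutantSet D, e * a - a ∈ Jset D φ ∧ a * e - a ∈ Jset D φ

/-- `D` is a weakly Cartan subalgebra of `A`. -/
def IsWeaklyCartan (D : NonUnitalStarSubalgebra ℂ A) : Prop :=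
  IsClosed (D : Set A) ∧ (∀ x ∈ D, ∀ y ∈ D, x * y = y * x) ∧ HasApproxUnit (D : Set A) ∧
  (∀ φ : characterSpace ℂ D, ∃ e, IsUnitModJ D φ e) ∧
  (∀ φ : characterSpace ℂ D, ∃ d ∈ D, ∃ U : Set (characterSpace ℂ D),
    IsOpen U ∧ φ ∈ U ∧ ∀ ψ ∈ U, IsUnitModJ D ψ d)

/-- The relative commutant `D'` as a non-unital star subalgebra of `A`. -/
def commutantAlg (D : NonUnitalStarSubalgebra ℂ A) : NonUnitalStarSubalgebra ℂ A where
  carrier := commutantSet D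
  add_mem' := by
    intro a b ha hb d hd
    simp only [commutantSet, Set.mem_setOf_eq] at *
    rw [add_mul, mul_add, ha d hd, hb d hd]
  zero_mem' := by
    intro d _
    rw [zero_mul, mul_zero]
  mul_mem' := by
    intro a b ha hb d hd
    calc a * b * d = a * (b * d) := by rw [mul_assoc]
      _ = a * (d * b) := by rw [hb d hd]
      _ = a * d * b := by rw [mul_assoc]
      _ = d * a * b := by rw [ha d hd]
      _ = d * (a * b) := by rw [mul_assoc]
  smul_mem' := by
    intro c a ha d hd
    rw [smul_mul_assoc, ha d hd, mul_smul_comm]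
  star_mem' := by
    intro a ha d hd
    calc star a * d = star (star d * a) := by rw [star_mul, star_star]
      _ = star (a * star d) := by rw [← ha (star d) (star_mem hd)]
      _ = d * star a := by rw [star_mul, star_star]

/-- `w` is a representative in `A` of the unitary `U^φ_{n*m}` of `D'/J_φ`:
`w = φ(m*m)^{-1/2}·φ(n*n)^{-1/2}·(d n* m d)` for some admissible `U` and `d`. -/
noncomputable def WeylRep (D : NonUnitalStarSubalgebra ℂ A) (n m : A)
    (φ : characterSpace ℂ D) (w : A) : Prop :=
  ∃ U : Set (characterSpace ℂ D), IsOpen U ∧ φ ∈ U ∧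
    U ⊆ suppo D (star n * n) ∩ suppo D (star m * m) ∧
    (∃ αn αm : PartialHomeomorph (characterSpace ℂ D) (characterSpace ℂ D),
       IsWeylHomeo D n αn ∧ IsWeylHomeo D m αm ∧ Set.EqOn ⇑αn ⇑αm U) ∧
    ∃ d ∈ (D : Set A), suppo D d ⊆ U ∧ evalD D φ d = 1 ∧
      w = (evalD D φ (star m * m) ^ (-(1/2) : ℂ) * evalD D φ (star n * n) ^ (-(1/2) : ℂ)) •
        (d * (star n * m) * d)

/-- The unitary `U^φ_{n*m}` of `D'/J_φ` lies in the connected component of the identity of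
the unitary group of `D'/J_φ`; the quotient `D'/J_φ` is represented by an arbitrary
surjective star-homomorphism `π` from `D'` onto a unital C*-algebra `Q` with kernel `J_φ`. -/
noncomputable def InU0 (D : NonUnitalStarSubalgebra ℂ A) (n m : A)
    (φ : characterSpace ℂ D) : Prop :=
  ∀ (Q : Type) [NormedRing Q] [StarRing Q] [CStarRing Q] [NormedAlgebra ℂ Q]
    [CompleteSpace Q] [StarModule ℂ Q] (π : commutantAlg D →⋆ₙₐ[ℂ] Q),
    Function.Surjective ⇑π →
    (∀ a : commutantAlg D, π a = 0 ↔ (a : A) ∈ Jset D φ) →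
    ∃ w : commutantAlg D, WeylRep D n m φ (w : A) ∧
      ∃ hu : π w ∈ unitary Q, (⟨π w, hu⟩ : unitary Q) ∈ connectedComponent (1 : unitary Q)

/-- The relation `(n, φ) ∼ (m, ψ)` of Lemma 4.7 (for the trivial coaction). -/
noncomputable def WeylSimRaw (D : NonUnitalStarSubalgebra ℂ A) (n : A)
    (φ : characterSpace ℂ D) (m : A) (ψ : characterSpace ℂ D) : Prop :=
  φ = ψ ∧
  (∃ U : Set (characterSpace ℂ D), IsOpen U ∧ φ ∈ U ∧
    U ⊆ suppo D (star n * n) ∩ suppo D (star m * m) ∧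
    ∃ αn αm : PartialHomeomorph (characterSpace ℂ D) (characterSpace ℂ D),
      IsWeylHomeo D n αn ∧ IsWeylHomeo D m αm ∧ Set.EqOn ⇑αn ⇑αm U) ∧
  InU0 D n m φ

/-- The set of pairs `(n, φ)` with `n ∈ N(D)` and `φ ∈ supp°(n*n)`. -/
def WeylPair (D : NonUnitalStarSubalgebra ℂ A) : Type :=
  {p : A × characterSpace ℂ D // IsNormalizer D p.1 ∧ p.2 ∈ suppo D (star p.1 * p.1)}

/-! Writing `n* d n - m* d m = n* d (n - m) + (n - m)* d m` gives
`‖n* d n - m* d m‖ ≤ ‖d‖ (‖n‖ + ‖m‖) ‖n - m‖`, and `‖n - m‖ < ‖n‖ / 5` makes the right side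
smaller than `‖n‖² / 2 < φ(n*n)` when `‖d‖ ≤ 1`.
Since characters are contractive, this first gives `φ(m*m) ≠ 0`. If moreover `α_n φ ≠ α_m φ`,
Urysohn's lemma on the Gelfand spectrum yields `d ∈ D` with `‖d‖ ≤ 1`, `α_n φ (d) = 1` and
`α_m φ (d) = 0`; then `φ(n* d n) = φ(n*n)` while `φ(m* d m) = 0`, contradicting the estimate. -/

namespace WeakDual.CharacterSpace

section Normed

variable {E : Type*} [NonUnitalNormedRing E] [NormedSpace ℂ E] [IsScalarTower ℂ E E]
  [SMulCommClass ℂ E E] [RegularNormedAlgebra ℂ E] [CompleteSpace E]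

theorem norm_apply_le (ψ : characterSpace ℂ E) (x : E) : ‖ψ x‖ ≤ ‖x‖ := by
  simpa [Unitization.norm_inr] using
    AlgHom.norm_apply_le_self (Unitization.lift (toNonUnitalAlgHom ψ)) (x : Unitization ℂ E)

end Normed

theorem exists_norm_le_one_of_isClosed {B : Type*} [CommCStarAlgebra B]
    {s t : Set (characterSpace ℂ B)} (hs : IsClosed s) (ht : IsClosed t) (hst : Disjoint s t) :
    ∃ y : B, ‖y‖ ≤ 1 ∧ (∀ θ ∈ s, θ y = 0) ∧ ∀ θ ∈ t, θ y = 1 := by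
  obtain ⟨f, hf0, hf1, hf01⟩ := exists_continuous_zero_one_of_isClosed hs ht hst
  let g : C(characterSpace ℂ B, ℂ) :=
    ⟨fun θ => (f θ : ℂ), Complex.continuous_ofReal.comp f.continuous⟩
  have hg : ‖g‖ ≤ 1 := by
    refine (ContinuousMap.norm_le _ zero_le_one).mpr fun θ => ?_
    simpa [g, abs_of_nonneg (hf01 θ).1] using (hf01 θ).2
  have happly (θ) : θ ((gelfandStarTransform B).symm g) = g θ :=
    congrArg (· θ) ((gelfandStarTransform B).apply_symm_apply g)
  refine ⟨(gelfandStarTransform B).symm g, ?_, fun θ hθ => ?_, fun θ hθ => ?_⟩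
  · rwa [StarAlgEquiv.norm_map]
  · rw [happly]; simpa [g] using hf0 hθ
  · rw [happly]; simpa [g] using hf1 hθ

variable {E : Type*} [NonUnitalCommCStarAlgebra E]

noncomputable def toUnitization (ψ : characterSpace ℂ E) : characterSpace ℂ (Unitization ℂ E) :=
  equivAlgHom.symm (Unitization.lift (toNonUnitalAlgHom ψ))

@[simp]
theorem toUnitization_apply_inr (ψ : characterSpace ℂ E) (x : E) :
    toUnitization ψ (x : Unitization ℂ E) = ψ x := by
  simp [toUnitization]

variable (E) in
noncomputable def fstUnitization : characterSpace ℂ (Unitization ℂ E) :=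
  equivAlgHom.symm (Unitization.fstHom ℂ E)

@[simp]
theorem fstUnitization_apply (y : Unitization ℂ E) : fstUnitization E y = y.fst := by
  simp [fstUnitization]

theorem exists_norm_le_one_apply_eq_one_apply_eq_zero {ψ χ : characterSpace ℂ E} (h : ψ ≠ χ) :
    ∃ x : E, ‖x‖ ≤ 1 ∧ ψ x = 1 ∧ χ x = 0 := by
  have hψχ : toUnitization ψ ≠ toUnitization χ := fun he =>
    h (ext fun x => by simpa using DFunLike.congr_fun he (x : Unitization ℂ E))
  have hψ : toUnitization ψ ≠ fstUnitization E := fun he =>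
    ψ.2.1 (ContinuousLinearMap.ext fun x =>
      (by simpa using DFunLike.congr_fun he (x : Unitization ℂ E) : ψ x = 0))
  -- Killing the character at infinity `fstUnitization E` forces the separating element into `E`.
  obtain ⟨y, hy, hy0, hy1⟩ := exists_norm_le_one_of_isClosed
    (s := {toUnitization χ, fstUnitization E}) (t := {toUnitization ψ})
    ((Set.finite_singleton _).insert (toUnitization χ)).isClosed isClosed_singleton
    (Set.disjoint_singleton_right.mpr (by simp [hψχ, hψ]))
  have hfst : y.fst = 0 := by simpa using hy0 (fstUnitization E) (by simp)
  have hy_inr : (y.snd : Unitization ℂ E) = y := by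
    rw [← Unitization.inl_fst_add_inr_snd_eq y, hfst]; simp
  refine ⟨y.snd, ?_, ?_, ?_⟩
  · rwa [← Unitization.norm_inr (𝕜 := ℂ), hy_inr]
  · rw [← toUnitization_apply_inr, hy_inr]
    exact hy1 _ rfl
  · rw [← toUnitization_apply_inr, hy_inr]
    exact hy0 _ (by simp)

end WeakDual.CharacterSpace

section StarConjugation

variable {R : Type*} [NonUnitalNormedRing R] [StarRing R] [NormedStarGroup R]

theorem norm_star_mul_self_sub_star_mul_self_le (n m : R) :
    ‖star n * n - star m * m‖ ≤ (‖n‖ + ‖m‖) * ‖n - m‖ := by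
  have hsplit : star n * n - star m * m = star n * (n - m) + star (n - m) * m := by
    rw [star_sub]; noncomm_ring
  calc ‖star n * n - star m * m‖ ≤ ‖star n‖ * ‖n - m‖ + ‖star (n - m)‖ * ‖m‖ := by
        rw [hsplit]; exact norm_add_le_of_le (norm_mul_le _ _) (norm_mul_le _ _)
    _ = (‖n‖ + ‖m‖) * ‖n - m‖ := by rw [norm_star, norm_star]; ring

theorem norm_star_mul_mul_sub_star_mul_mul_le (n m d : R) :
    ‖star n * d * n - star m * d * m‖ ≤ ‖d‖ * ((‖n‖ + ‖m‖) * ‖n - m‖) := by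
  have hsplit : star n * d * n - star m * d * m = star n * d * (n - m) + star (n - m) * d * m := by
    rw [star_sub]; noncomm_ring
  calc ‖star n * d * n - star m * d * m‖
      ≤ ‖star n‖ * ‖d‖ * ‖n - m‖ + ‖star (n - m)‖ * ‖d‖ * ‖m‖ := by
        rw [hsplit]; exact norm_add_le_of_le (norm_mul₃_le ..) (norm_mul₃_le ..)
    _ = ‖d‖ * ((‖n‖ + ‖m‖) * ‖n - m‖) := by rw [norm_star, norm_star]; ring

end StarConjugation

theorem add_norm_mul_norm_sub_lt {G : Type*} [SeminormedAddCommGroup G] {n m : G}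
    (hnm : ‖n - m‖ < ‖n‖ / 5) : (‖n‖ + ‖m‖) * ‖n - m‖ < ‖n‖ ^ 2 / 2 := by
  have hm : ‖m‖ ≤ ‖n‖ + ‖n - m‖ := by simpa using norm_sub_le n (n - m)
  nlinarith [norm_nonneg (n - m)]

section NormedStarRing

variable {B : Type} [NonUnitalNormedRing B] [StarRing B] [NormedSpace ℂ B]
  {D : NonUnitalStarSubalgebra ℂ B}

theorem evalD_of_mem (φ : characterSpace ℂ D) {a : B} (ha : a ∈ D) :
    evalD D φ a = φ ⟨a, ha⟩ :=
  dif_pos ha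

theorem star_mul_self_mem_of_isNormalizer (hD : IsClosed (D : Set B))
    (hDapprox : HasApproxUnit (D : Set B)) {n : B} (hn : IsNormalizer D n) :
    star n * n ∈ D := by
  obtain ⟨ι, l, e, hl, heD, he⟩ := hDapprox
  have hlim : Tendsto (fun i => star n * e i * n) l (𝓝 (star n * n)) := by
    simpa only [mul_assoc] using ((he n).1.const_mul (star n))
  exact hD.mem_of_tendsto hlim (Eventually.of_forall fun i => (hn (e i) (heD i)).2)

end NormedStarRing

section CStarRing

variable {D : NonUnitalStarSubalgebra ℂ A}

theorem norm_evalD_sub_le (hD : IsClosed (D : Set A)) (φ : characterSpace ℂ D) {a b : A}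
    (ha : a ∈ D) (hb : b ∈ D) : ‖evalD D φ a - evalD D φ b‖ ≤ ‖a - b‖ := by
  let : NonUnitalCStarAlgebra A := { }
  let := NonUnitalStarSubalgebra.nonUnitalCStarAlgebra D (h_closed := hD)
  rw [evalD_of_mem φ ha, evalD_of_mem φ hb, ← map_sub]
  exact CharacterSpace.norm_apply_le φ (⟨a, ha⟩ - ⟨b, hb⟩)

theorem exists_norm_le_one_evalD_eq_one_evalD_eq_zero (hD : IsClosed (D : Set A))
    (hDcomm : ∀ x ∈ D, ∀ y ∈ D, x * y = y * x) {ψ χ : characterSpace ℂ D} (h : ψ ≠ χ) :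
    ∃ x ∈ D, ‖x‖ ≤ 1 ∧ evalD D ψ x = 1 ∧ evalD D χ x = 0 := by
  let : NonUnitalCStarAlgebra A := { }
  let : NonUnitalCommCStarAlgebra D :=
    { NonUnitalStarSubalgebra.nonUnitalCStarAlgebra D (h_closed := hD) with
      mul_comm := fun x y => Subtype.ext (hDcomm x x.2 y y.2) }
  obtain ⟨x, hx, hψ, hχ⟩ := CharacterSpace.exists_norm_le_one_apply_eq_one_apply_eq_zero h
  exact ⟨x, x.2, hx, by rwa [evalD_of_mem ψ x.2], by rwa [evalD_of_mem χ x.2]⟩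

end CStarRing

theorem statement_12
    (D : NonUnitalStarSubalgebra ℂ A) (hDclosed : IsClosed (D : Set A))
    (hDabelian : ∀ x ∈ D, ∀ y ∈ D, x * y = y * x)
    (hDapprox : HasApproxUnit (D : Set A))
    (n m : A) (hn : IsNormalizer D n) (hm : IsNormalizer D m)
    (hnm : ‖n - m‖ < ‖n‖ / 5)
    (αn αm : PartialHomeomorph (characterSpace ℂ D) (characterSpace ℂ D))
    (hαn : IsWeylHomeo D n αn) (hαm : IsWeylHomeo D m αm)
    (φ : characterSpace ℂ D) (r : ℝ)
    (hr : evalD D φ (star n * n) = (r : ℂ)) (hr2 : ‖n‖ ^ 2 / 2 < r) :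
    φ ∈ αn.source ∧ φ ∈ αm.source ∧ αn φ = αm φ := by
  have hK := add_norm_mul_norm_sub_lt hnm
  have hr0 : 0 < r := (by positivity : (0 : ℝ) ≤ ‖n‖ ^ 2 / 2).trans_lt hr2
  have hnorm_r : ‖(r : ℂ)‖ = r := by rw [Complex.norm_real, Real.norm_of_nonneg hr0.le]
  have hφn : φ ∈ αn.source := by
    rw [hαn.1, suppo, Set.mem_ofPred_eq, hr]
    exact_mod_cast hr0.ne'
  have hφm : φ ∈ αm.source := by
    rw [hαm.1]
    intro hφ0
    have h := norm_evalD_sub_le hDclosed φ (star_mul_self_mem_of_isNormalizer hDclosed hDapprox hn)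
      (star_mul_self_mem_of_isNormalizer hDclosed hDapprox hm)
    rw [hr, hφ0, sub_zero, hnorm_r] at h
    linarith [norm_star_mul_self_sub_star_mul_self_le n m]
  refine ⟨hφn, hφm, ?_⟩
  by_contra hne
  obtain ⟨x, hxD, hx, hx1, hx0⟩ :=
    exists_norm_le_one_evalD_eq_one_evalD_eq_zero hDclosed hDabelian hne
  have h := norm_evalD_sub_le hDclosed φ (hn x hxD).2 (hm x hxD).2
  rw [← hαn.2.2 φ hφn x hxD, ← hαm.2.2 φ hφm x hxD, hx1, hx0, hr, mul_one, mul_zero, sub_zero,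
    hnorm_r] at h
  have hxK := mul_le_of_le_one_left (by positivity : 0 ≤ (‖n‖ + ‖m‖) * ‖n - m‖) hx
  linarith [norm_star_mul_mul_sub_star_mul_mul_le n m x]
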